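/- Let Θ be a nonempty set and T a positive integer. For each round t ∈ {1, …, T}, let μ_{t−1}, σ_{t−1} : Θ → ℝ with σ_{t−1}(θ) ≥ 0 for all θ, let β_t ≥ 0, and suppose the confidence bound |f(θ) − μ_{t−1}(θ)| ≤ √β_t · σ_{t−1}(θ) holds for all θ ∈ Θ, where f : Θ → ℝ is fixed. Suppose θ_t ∈ Θ maximizes θ ↦ μ_{t−1}(θ) + √β_t · σ_{t−1}(θ) over Θ. Then for any θ* ∈ Θ the cumulative regret satisfies Σ_{t=1}^{T} (f(θ*) − f(θ_t)) ≤ 2 · √( (Σ_{t=1}^{T} β_t) · (Σ_{t=1}^{T} σ_{t−1}(θ_t)²) ). -/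

import Mathlib

/-! Optimism bounds each round's regret: the confidence band around `μ` makes the upper
confidence bound dominate `f`, and since `θsel t` maximizes it,
`f θstar - f (θsel t) ≤ 2 √(β t) σ t (θsel t)`. Summing over rounds and applying
Cauchy–Schwarz to `∑ √(β t) · σ t (θsel t)` gives the bound. -/

open Finset

theorem sub_le_two_mul_width_of_ucb_le {α : Type*} (f m w : α → ℝ) {x y : α}
    (hx : |f x - m x| ≤ w x) (hy : |f y - m y| ≤ w y) (hxy : m x + w x ≤ m y + w y) :
    f x - f y ≤ 2 * w y := by
  linarith [(abs_le.1 hx).2, (abs_le.1 hy).1]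

theorem Real.sum_sqrt_mul_le_sqrt_sum_mul_sum_sq {ι : Type*} (s : Finset ι) {a : ι → ℝ}
    (ha : ∀ i ∈ s, 0 ≤ a i) (b : ι → ℝ) :
    ∑ i ∈ s, √(a i) * b i ≤ √((∑ i ∈ s, a i) * ∑ i ∈ s, b i ^ 2) := by
  have hsq : ∑ i ∈ s, √(a i) ^ 2 = ∑ i ∈ s, a i :=
    sum_congr rfl fun i hi => Real.sq_sqrt (ha i hi)
  apply Real.le_sqrt_of_sq_le
  simpa only [hsq] using sum_mul_sq_le_sq_mul_sq s (fun i => √(a i)) b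

open Finset in
theorem ucb_cumulative_regret_general {Θ : Type*}
    (T : ℕ)
    (f : Θ → ℝ) (μ σ : Fin T → Θ → ℝ) (β : Fin T → ℝ)
    (θsel : Fin T → Θ) (θstar : Θ)
    (hβ : ∀ t, 0 ≤ β t)
    (hconf : ∀ t θ, |f θ - μ t θ| ≤ Real.sqrt (β t) * σ t θ)
    (hmax : ∀ t θ, μ t θ + Real.sqrt (β t) * σ t θ
        ≤ μ t (θsel t) + Real.sqrt (β t) * σ t (θsel t)) :
    ∑ t : Fin T, (f θstar - f (θsel t))
      ≤ 2 * Real.sqrt ((∑ t : Fin T, β t) * (∑ t : Fin T, (σ t (θsel t)) ^ 2)) := by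
  have hregret t : f θstar - f (θsel t) ≤ 2 * (√(β t) * σ t (θsel t)) :=
    sub_le_two_mul_width_of_ucb_le f (μ t) (fun θ => √(β t) * σ t θ)
      (hconf t θstar) (hconf t (θsel t)) (hmax t θstar)
  calc ∑ t, (f θstar - f (θsel t))
      ≤ ∑ t, 2 * (√(β t) * σ t (θsel t)) := sum_le_sum fun t _ => hregret t
    _ = 2 * ∑ t, √(β t) * σ t (θsel t) := (mul_sum _ _ _).symm
    _ ≤ 2 * √((∑ t, β t) * ∑ t, σ t (θsel t) ^ 2) := by
      gcongr
      exact Real.sum_sqrt_mul_le_sqrt_sum_mul_sum_sq _ (fun t _ => hβ t) _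

open Finset in
/-- Deterministic core of the GP-UCB cumulative regret bound.
With per-round confidence bounds `|f θ - μ t θ| ≤ √(β t) * σ t θ` and `θsel t`
maximizing the upper confidence bound at round `t`, the cumulative regret with
respect to any `θstar` is bounded by
`2 * √((∑ β t) * (∑ (σ t (θsel t))²))` (Cauchy–Schwarz). -/
theorem ucb_cumulative_regret {Θ : Type*} [Nonempty Θ]
    (T : ℕ) (hT : 0 < T)
    (f : Θ → ℝ) (μ σ : Fin T → Θ → ℝ) (β : Fin T → ℝ)
    (θsel : Fin T → Θ) (θstar : Θ)
    (hσ : ∀ t θ, 0 ≤ σ t θ) (hβ : ∀ t, 0 ≤ β t)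
    (hconf : ∀ t θ, |f θ - μ t θ| ≤ Real.sqrt (β t) * σ t θ)
    (hmax : ∀ t θ, μ t θ + Real.sqrt (β t) * σ t θ
        ≤ μ t (θsel t) + Real.sqrt (β t) * σ t (θsel t)) :
    ∑ t : Fin T, (f θstar - f (θsel t))
      ≤ 2 * Real.sqrt ((∑ t : Fin T, β t) * (∑ t : Fin T, (σ t (θsel t)) ^ 2)) :=
  ucb_cumulative_regret_general T f μ σ β θsel θstar hβ hconf hmax
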